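/- Combining: let g : ℝⁿ → ℝ be convex (the adversarial loss ℓ̃_ρ^adv), let h : ℝⁿ → ℝᵐ be linear and injective, let L = g ∘ h⁻¹ (defined on the range of h) be L-Lipschitz, let μ be a probability measure on ℝⁿ with mean m, and let x' satisfy ‖h(x') - ∫ h(x) dμ(x)‖ ≤ σ. Then g(x') ≤ ∫ g(x) dμ(x) + L·σ. -/

import Mathlib

/-! Jensen's inequality puts `g` at the mean `x̄ = ∫ x dμ` below `∫ g dμ`. Since `h` is linear it
commutes with the integral, so `h x̄ = ∫ h dμ` lies within `σ` of `h x'`, and the Lipschitz bound in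
feature space makes moving from `x̄` to `x'` cost at most `L σ`. -/

open MeasureTheory

/-- Jensen's inequality without a continuity hypothesis: in finite dimension a convex function on
the whole space is continuous. -/
theorem ConvexOn.map_integral_le_of_finiteDimensional {α E : Type*} [MeasurableSpace α]
    [NormedAddCommGroup E] [NormedSpace ℝ E] [FiniteDimensional ℝ E]
    {μ : Measure α} [IsProbabilityMeasure μ] {g : E → ℝ} {f : α → E}
    (hg : ConvexOn ℝ Set.univ g) (hf : Integrable f μ) (hgf : Integrable (g ∘ f) μ) :
    g (∫ x, f x ∂μ) ≤ ∫ x, g (f x) ∂μ :=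
  hg.map_integral_le (hg.continuousOn isOpen_univ) isClosed_univ
    (Filter.Eventually.of_forall fun _ => Set.mem_univ _) hf hgf

theorem combined_jensen_lipschitz_bound_general {n m : ℕ}
    (μ : Measure (EuclideanSpace ℝ (Fin n))) [IsProbabilityMeasure μ]
    (g : EuclideanSpace ℝ (Fin n) → ℝ) (hg : ConvexOn ℝ Set.univ g)
    (hgi : Integrable g μ) (hmean : Integrable (fun x => x) μ)
    (h : EuclideanSpace ℝ (Fin n) →ₗ[ℝ] EuclideanSpace ℝ (Fin m))
    (L σ : ℝ) (hL : 0 ≤ L)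
    (hLip : ∀ y₁ y₂ : EuclideanSpace ℝ (Fin n), |g y₁ - g y₂| ≤ L * ‖h y₁ - h y₂‖)
    (x' : EuclideanSpace ℝ (Fin n))
    (hx' : ‖h x' - ∫ x, h x ∂μ‖ ≤ σ) :
    g x' ≤ (∫ x, g x ∂μ) + L * σ := by
  set xbar := ∫ x, x ∂μ
  have hmap : ∫ x, h x ∂μ = h xbar := h.toContinuousLinearMap.integral_comp_comm hmean
  have hjensen : g xbar ≤ ∫ x, g x ∂μ := hg.map_integral_le_of_finiteDimensional hmean hgi
  rw [hmap] at hx'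
  calc g x' ≤ g xbar + L * ‖h x' - h xbar‖ := by linarith [le_abs_self (g x' - g xbar), hLip x' xbar]
    _ ≤ (∫ x, g x ∂μ) + L * σ := by gcongr

/-- Combining Jensen's inequality with the Lipschitz bound in feature space:
if `g` is convex and integrable, `h` is linear and injective, `g ∘ h⁻¹` is `L`-Lipschitz on
the range of `h` (i.e. `|g y₁ - g y₂| ≤ L ‖h y₁ - h y₂‖`), and
`‖h(x') - ∫ h(x) dμ‖ ≤ σ`, then `g(x') ≤ ∫ g(x) dμ + L·σ`. -/
theorem combined_jensen_lipschitz_bound {n m : ℕ}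
    (μ : Measure (EuclideanSpace ℝ (Fin n))) [IsProbabilityMeasure μ]
    (g : EuclideanSpace ℝ (Fin n) → ℝ) (hg : ConvexOn ℝ Set.univ g)
    (hgi : Integrable g μ) (hmean : Integrable (fun x => x) μ)
    (h : EuclideanSpace ℝ (Fin n) →ₗ[ℝ] EuclideanSpace ℝ (Fin m))
    (hinj : Function.Injective h)
    (L σ : ℝ) (hL : 0 ≤ L) (hσ : 0 ≤ σ)
    (hLip : ∀ y₁ y₂ : EuclideanSpace ℝ (Fin n), |g y₁ - g y₂| ≤ L * ‖h y₁ - h y₂‖)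
    (x' : EuclideanSpace ℝ (Fin n))
    (hx' : ‖h x' - ∫ x, h x ∂μ‖ ≤ σ) :
    g x' ≤ (∫ x, g x ∂μ) + L * σ :=
  combined_jensen_lipschitz_bound_general μ g hg hgi hmean h L σ hL hLip x' hx'
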